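/- For every real ε > 0 there exists d₀ such that for all integers d ≥ d₀ and all integers m ≥ (1+ε) · log_{4/3} d, every system of m trees T_1, …, T_m on the same finite vertex set V, each of maximum degree at most d, has a cooperative coloring. In particular, m_T(d) ≤ (1+o(1)) log_{4/3} d for the class T of trees. -/

import Mathlib

/-- A set of vertices is independent in the graph `G`:
no two of its vertices are adjacent. -/
def IndepIn {V : Type*} (G : SimpleGraph V) (I : Set V) : Prop :=
  ∀ ⦃u⦄, u ∈ I → ∀ ⦃v⦄, v ∈ I → ¬ G.Adj u v

/-- `(I j)` is a cooperative coloring for the system `G` of graphs: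
each `I j` is independent in `G j` and the sets `I j` cover all vertices. -/
def IsCoopColoring {V : Type*} {m : ℕ} (G : Fin m → SimpleGraph V)
    (I : Fin m → Set V) : Prop :=
  (∀ j, IndepIn (G j) (I j)) ∧ (⋃ j, I j) = Set.univ

/-- The system `G` of graphs has a cooperative coloring. -/
def HasCoopColoring {V : Type*} {m : ℕ} (G : Fin m → SimpleGraph V) : Prop :=
  ∃ I : Fin m → Set V, IsCoopColoring G I

/-- The maximum degree of a graph on a finite vertex set. -/
noncomputable def maxDeg {V : Type*} [Fintype V] (G : SimpleGraph V) : ℕ :=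
  Finset.univ.sup fun v => (G.neighborSet v).ncard

/-- Every system of `m` trees of maximum degree at most `d` on a common finite
vertex set has a cooperative coloring. -/
def TreesColorable (d m : ℕ) : Prop :=
  ∀ (V : Type) [Fintype V] (T : Fin m → SimpleGraph V),
    (∀ i, (T i).IsTree) → (∀ i, maxDeg (T i) ≤ d) → HasCoopColoring T

/-- `m_T(d)`: the least `m` such that every `m` trees of maximum degree at most
`d` on a common finite vertex set have a cooperative coloring. -/
noncomputable def mT (d : ℕ) : ℕ := sInf {m | TreesColorable d m}

/-!
Root every tree `T j` and give each pair `(j, v)` an independent fair bit. A vertex joins the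
colour class of `T j` when its own bit is set and the bit of its `T j`-parent is not (a root
only needs its own bit); these classes are independent in `T j`. A vertex is missed by all `m`
classes with probability at most `(3/4)^m`, and this event is determined by the bits of `v` and
of its parents, so it is mutually independent of all but `m (2d + 3)` of the other such events.
The symmetric Lovász local lemma, in its counting form on the space of bit vectors, therefore
produces a cooperative colouring once `3 (m (2d + 3) + 2) ≤ (4/3)^m`, which holds whenever
`m ≥ (1 + ε) log_{4/3} d` and `d` is large.
-/

open Finset Function

theorem dependsOn_forall_mem {ι κ : Type*} {α : ι → Type*} {P : κ → (Π i, α i) → Prop}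
    {s : κ → Set ι} (J : Set κ) (hP : ∀ j ∈ J, DependsOn (P j) (s j)) :
    DependsOn (fun x => ∀ j ∈ J, P j x) (⋃ j ∈ J, s j) := by
  intro x y hxy
  exact propext <| forall₂_congr fun j hj =>
    Iff.of_eq <| hP j hj fun i hi => hxy i (Set.mem_biUnion hj hi)

section ProductCounting

variable {ι α : Type*} [Fintype ι] [DecidableEq ι] [Fintype α] [DecidableEq α]

theorem card_inter_mul_card_fun {B C : Finset (ι → α)} {s t : Set ι} (hst : Disjoint s t)
    (hB : DependsOn (· ∈ B) s) (hC : DependsOn (· ∈ C) t) :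
    #(B ∩ C) * Fintype.card (ι → α) = #B * #C := by
  classical
  have hs : ∀ x y : ι → α, ∀ i ∈ s, s.piecewise x y i = x i := fun x y i hi =>
    s.piecewise_eq_of_mem x y hi
  have ht : ∀ x y : ι → α, ∀ i ∈ t, s.piecewise x y i = y i := fun x y i hi =>
    s.piecewise_eq_of_notMem x y (hst.notMem_of_mem_right hi)
  have hinv : ∀ x y : ι → α, s.piecewise (s.piecewise x y) (s.piecewise y x) = x := by
    intro x y; ext i; by_cases hi : i ∈ s <;> simp [hi]
  -- exchanging the `s`-coordinates of `x` and `y` matches `(B ∩ C) × Ω` with `B × C`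
  let swap : (ι → α) × (ι → α) → (ι → α) × (ι → α) := fun q =>
    (s.piecewise q.1 q.2, s.piecewise q.2 q.1)
  have key : #((B ∩ C) ×ˢ (univ : Finset (ι → α))) = #(B ×ˢ C) := by
    refine card_nbij' swap swap ?_ ?_ (fun q _ => by simp [swap, hinv])
      (fun q _ => by simp [swap, hinv])
    · rintro ⟨x, y⟩ hq
      simp only [coe_product, coe_inter, coe_univ, Set.mem_prod, Set.mem_inter_iff, mem_coe,
        Set.mem_univ, and_true] at hq ⊢
      exact ⟨(hB (hs x y)).mpr hq.1, (hC (ht y x)).mpr hq.2⟩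
    · rintro ⟨x, y⟩ hq
      simp only [coe_product, coe_inter, coe_univ, Set.mem_prod, Set.mem_inter_iff, mem_coe,
        Set.mem_univ, and_true] at hq ⊢
      exact ⟨(hB (hs x y)).mpr hq.1, (hC (ht x y)).mpr hq.2⟩
  simpa [card_product] using key

theorem card_filter_apply_eq_mul (i : ι) (a : α) :
    #{x : ι → α | x i = a} * Fintype.card α = Fintype.card (ι → α) := by
  have h := Fintype.card_filter_piFinset_const_eq_of_mem (univ : Finset α) i (mem_univ a)
  rw [Fintype.piFinset_univ] at h
  rw [h, card_univ, Fintype.card_fun, ← pow_succ,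
    Nat.sub_add_cancel (Fintype.card_pos_iff.mpr ⟨i⟩)]

theorem card_filter_forall_mem_le_pow_mul [Nonempty α] {κ : Type*} (J : Finset κ)
    {B : κ → Finset (ι → α)} {s : κ → Set ι} (hB : ∀ j, DependsOn (· ∈ B j) (s j))
    (hs : Pairwise (Disjoint on s))
    {q : ℝ} (hq : ∀ j, #(B j) ≤ q * Fintype.card (ι → α)) :
    #{x | ∀ j ∈ J, x ∈ B j} ≤ q ^ #J * Fintype.card (ι → α) := by
  classical
  have hN : (0 : ℝ) < Fintype.card (ι → α) := by exact_mod_cast Fintype.card_pos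
  induction J using Finset.induction_on with
  | empty => simp
  | @insert a J ha ih =>
    set X : Finset (ι → α) := {x | ∀ j ∈ J, x ∈ B j}
    have hsplit : ({x | ∀ j ∈ insert a J, x ∈ B j} : Finset (ι → α)) = B a ∩ X := by
      ext x; simp [X]
    have hdisj : Disjoint (s a) (⋃ j ∈ (J : Set κ), s j) :=
      Set.disjoint_iUnion₂_right.mpr fun j hj => hs (ne_of_mem_of_not_mem hj ha).symm
    have hdep : DependsOn (· ∈ X) (⋃ j ∈ (J : Set κ), s j) := by
      simpa [X] using dependsOn_forall_mem (J : Set κ) (fun j _ => hB j)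
    rw [hsplit, card_insert_of_notMem ha, pow_succ]
    refine le_of_mul_le_mul_right ?_ hN
    calc (#(B a ∩ X) : ℝ) * Fintype.card (ι → α) = #(B a) * #X := by
          exact_mod_cast card_inter_mul_card_fun hdisj (hB a) hdep
      _ ≤ (q * Fintype.card (ι → α)) * (q ^ #J * Fintype.card (ι → α)) :=
        mul_le_mul (hq a) ih (by positivity) ((Nat.cast_nonneg _).trans (hq a))
      _ = q ^ #J * q * Fintype.card (ι → α) * Fintype.card (ι → α) := by ring

end ProductCounting

section LocalLemma

variable {Ω F : Type*} [Fintype Ω] [DecidableEq Ω] (A : F → Finset Ω)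

def avoiding (S : Finset F) : Finset Ω := {ω | ∀ u ∈ S, ω ∉ A u}

variable {A}

theorem avoiding_insert [DecidableEq F] (u : F) (S : Finset F) :
    avoiding A (insert u S) = avoiding A S \ A u := by
  ext ω; simp [avoiding, and_comm]

theorem avoiding_anti {S T : Finset F} (h : S ⊆ T) : avoiding A T ⊆ avoiding A S := by
  intro ω; simp only [avoiding, mem_filter, mem_univ, true_and]
  exact fun hω u hu => hω u (h hu)

theorem inter_avoiding_eq_empty {v : F} {S : Finset F} (hv : v ∈ S) :
    A v ∩ avoiding A S = ∅ := by
  ext ω; simp only [avoiding, mem_inter, mem_filter, mem_univ, true_and, notMem_empty, iff_false]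
  exact fun ⟨hω, h⟩ => h v hv hω

theorem one_sub_mul_card_avoiding_le [DecidableEq F] {x : ℝ} {u : F} {S : Finset F}
    (h : #(A u ∩ avoiding A S) ≤ x * #(avoiding A S)) :
    (1 - x) * #(avoiding A S) ≤ #(avoiding A (insert u S)) := by
  have hsplit := card_sdiff_add_card_inter (avoiding A S) (A u)
  rw [inter_comm] at hsplit
  rw [avoiding_insert]
  have : (#(avoiding A S \ A u) : ℝ) + #(A u ∩ avoiding A S) = #(avoiding A S) := by
    exact_mod_cast hsplit
  linarith

theorem pow_mul_card_avoiding_le [DecidableEq F] {x : ℝ} (hx : x ≤ 1) {S T : Finset F}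
    (hST : Disjoint S T)
    (h : ∀ W ⊂ S ∪ T, ∀ u, #(A u ∩ avoiding A W) ≤ x * #(avoiding A W)) :
    (1 - x) ^ #T * #(avoiding A S) ≤ #(avoiding A (S ∪ T)) := by
  induction T using Finset.induction_on with
  | empty => simp
  | @insert u T hu ih =>
    have huS : u ∉ S := disjoint_right.mp hST (mem_insert_self u T)
    have hsub : S ∪ T ⊂ S ∪ insert u T := by
      rw [union_insert]; exact ssubset_insert (by simp [huS, hu])
    have ih' := ih (disjoint_of_subset_right (subset_insert u T) hST)
      fun W hW => h W (hW.trans hsub)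
    rw [card_insert_of_notMem hu, pow_succ, mul_comm _ (1 - x), mul_assoc, union_insert]
    calc (1 - x) * ((1 - x) ^ #T * #(avoiding A S))
        ≤ (1 - x) * #(avoiding A (S ∪ T)) := mul_le_mul_of_nonneg_left ih' (by linarith)
      _ ≤ #(avoiding A (insert u (S ∪ T))) := one_sub_mul_card_avoiding_le (h _ hsub u)

variable [Nonempty Ω] {Γ : F → Finset F} {x : ℝ} {D : ℕ}

theorem card_inter_avoiding_le [DecidableEq F] (hx0 : 0 ≤ x) (hx1 : x ≤ 1)
    (hΓ : ∀ v, #(Γ v) ≤ D)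
    (hind : ∀ v S, v ∉ S → Disjoint S (Γ v) →
      #(A v ∩ avoiding A S) * Fintype.card Ω = #(A v) * #(avoiding A S))
    (hA : ∀ v, #(A v) ≤ x * (1 - x) ^ D * Fintype.card Ω) (S : Finset F) (v : F) :
    #(A v ∩ avoiding A S) ≤ x * #(avoiding A S) := by
  induction S using Finset.strongInduction generalizing v with | H S ih =>
  by_cases hvS : v ∈ S
  · rw [inter_avoiding_eq_empty hvS, card_empty, Nat.cast_zero]; positivity
  -- `A v` is independent of the events outside `Γ v`; each one inside costs a factor `1 - x`
  set S₁ := S ∩ Γ v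
  set S₂ := S \ Γ v
  have hS : S₂ ∪ S₁ = S := sdiff_union_inter S (Γ v)
  have hS₁ : #S₁ ≤ D := (card_le_card inter_subset_right).trans (hΓ v)
  have hpeel : (1 - x) ^ #S₁ * #(avoiding A S₂) ≤ #(avoiding A S) := by
    have h := pow_mul_card_avoiding_le hx1 (disjoint_sdiff_inter S (Γ v))
      (fun W hW => ih W (hS ▸ hW))
    rwa [hS] at h
  have hN : (0 : ℝ) < Fintype.card Ω := by exact_mod_cast Fintype.card_pos
  refine le_of_mul_le_mul_right ?_ hN
  calc (#(A v ∩ avoiding A S) : ℝ) * Fintype.card Ω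
      ≤ #(A v ∩ avoiding A S₂) * Fintype.card Ω := by
        gcongr; exact avoiding_anti sdiff_subset
    _ = #(A v) * #(avoiding A S₂) := by
        exact_mod_cast hind v S₂ (fun h => hvS (mem_sdiff.mp h).1) sdiff_disjoint
    _ ≤ x * (1 - x) ^ D * Fintype.card Ω * #(avoiding A S₂) := by gcongr; exact hA v
    _ ≤ x * (1 - x) ^ #S₁ * Fintype.card Ω * #(avoiding A S₂) := by
        have := pow_le_pow_of_le_one (sub_nonneg.mpr hx1) (by linarith) hS₁
        gcongr
    _ ≤ x * #(avoiding A S) * Fintype.card Ω := by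
        nlinarith [mul_le_mul_of_nonneg_left hpeel (mul_nonneg hx0 hN.le)]

theorem exists_forall_notMem_of_card_le [Fintype F] (hx0 : 0 ≤ x) (hx1 : x < 1)
    (hΓ : ∀ v, #(Γ v) ≤ D)
    (hind : ∀ v S, v ∉ S → Disjoint S (Γ v) →
      #(A v ∩ avoiding A S) * Fintype.card Ω = #(A v) * #(avoiding A S))
    (hA : ∀ v, #(A v) ≤ x * (1 - x) ^ D * Fintype.card Ω) :
    ∃ ω, ∀ v, ω ∉ A v := by
  classical
  have h := pow_mul_card_avoiding_le hx1.le (disjoint_empty_left univ)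
    fun W _ => card_inter_avoiding_le hx0 hx1.le hΓ hind hA W
  have hempty : avoiding A (∅ : Finset F) = univ := by ext; simp [avoiding]
  rw [hempty, empty_union, card_univ] at h
  have hN : (0 : ℝ) < Fintype.card Ω := by exact_mod_cast Fintype.card_pos
  have hpos : (0 : ℝ) < #(avoiding A (univ : Finset F)) :=
    lt_of_lt_of_le (mul_pos (pow_pos (by linarith) _) hN) h
  obtain ⟨ω, hω⟩ := card_pos.mp (by exact_mod_cast hpos)
  exact ⟨ω, by simpa [avoiding] using hω⟩

end LocalLemma

theorem one_third_le_one_sub_inv_pow (n : ℕ) : (1 / 3 : ℝ) ≤ (1 - 1 / (n + 2 : ℝ)) ^ n := by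
  have hbase : (1 - 1 / (n + 2 : ℝ)) * (1 + ((n + 1 : ℕ) : ℝ)⁻¹) = 1 := by
    push_cast; field_simp; ring
  have hprod :
      (1 - 1 / (n + 2 : ℝ)) ^ (n + 1) * (1 + ((n + 1 : ℕ) : ℝ)⁻¹) ^ (n + 1) = 1 := by
    rw [← mul_pow, hbase, one_pow]
  have he : (1 + ((n + 1 : ℕ) : ℝ)⁻¹) ^ (n + 1) < 3 :=
    Real.one_add_inv_pow_le_exp.trans_lt (lt_trans Real.exp_one_lt_d9 (by norm_num))
  have hpos : 0 < (1 + ((n + 1 : ℕ) : ℝ)⁻¹) ^ (n + 1) := by positivity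
  have hmono : (1 - 1 / (n + 2 : ℝ)) ^ (n + 1) ≤ (1 - 1 / (n + 2 : ℝ)) ^ n :=
    pow_le_pow_of_le_one (by rw [sub_nonneg, div_le_one (by positivity)]; linarith)
      (by rw [sub_le_self_iff]; positivity) n.le_succ
  nlinarith

section VariableSetting

variable {ι α F : Type*} [Fintype ι] [DecidableEq ι] [Fintype α] [DecidableEq α] [Nonempty α]
  [Fintype F]

theorem exists_forall_notMem_of_dependsOn (A : F → Finset (ι → α)) (s : F → Set ι)
    (Γ : F → Finset F) (D : ℕ) (hA : ∀ v, DependsOn (· ∈ A v) (s v))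
    (hΓ : ∀ u v, u ≠ v → ¬Disjoint (s u) (s v) → u ∈ Γ v) (hD : ∀ v, #(Γ v) ≤ D)
    (hp : ∀ v, 3 * (D + 2) * #(A v) ≤ Fintype.card (ι → α)) :
    ∃ x, ∀ v, x ∉ A v := by
  classical
  -- `x = 1 / (D + 2)` rather than the usual `1 / (D + 1)`, which is `1` when `D = 0`
  refine exists_forall_notMem_of_card_le (x := 1 / (D + 2)) (by positivity)
    ((div_lt_one (by positivity)).mpr (by linarith [(Nat.cast_nonneg D : (0 : ℝ) ≤ D)])) hD ?_
    fun v => ?_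
  · intro v S hvS hSΓ
    have hdisj : Disjoint (s v) (⋃ u ∈ (S : Set F), s u) :=
      Set.disjoint_iUnion₂_right.mpr fun u hu => by
        by_contra h
        exact disjoint_left.mp hSΓ hu (hΓ u v (ne_of_mem_of_not_mem hu hvS) fun h' => h h'.symm)
    have hdep : DependsOn (· ∈ avoiding A S) (⋃ u ∈ (S : Set F), s u) := by
      have := dependsOn_forall_mem (P := fun u x => x ∉ A u) (S : Set F)
        fun u _ x y hxy => congrArg Not (hA u hxy)
      simpa [avoiding] using this
    exact card_inter_mul_card_fun hdisj (hA v) hdep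
  · have hv : (3 * (D + 2) * #(A v) : ℝ) ≤ Fintype.card (ι → α) := by exact_mod_cast hp v
    have h3 := one_third_le_one_sub_inv_pow D
    calc (#(A v) : ℝ) ≤ 1 / (D + 2) * (1 / 3) * Fintype.card (ι → α) := by
          field_simp
          linarith
      _ ≤ 1 / (D + 2) * (1 - 1 / (D + 2)) ^ D * Fintype.card (ι → α) := by gcongr

end VariableSetting

namespace SimpleGraph

variable {V : Type*} {G : SimpleGraph V}

variable (G) in
structure IsParentMap (p : V → V) : Prop where
  eq_or_adj : ∀ v, p v = v ∨ G.Adj v (p v)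
  eq_or_eq_of_adj : ∀ ⦃u v⦄, G.Adj u v → p u = v ∨ p v = u

theorem Walk.penultimate_eq_or_adj {r v : V} (P : G.Walk r v) :
    P.penultimate = v ∨ G.Adj v P.penultimate := by
  cases P with
  | nil => exact Or.inl rfl
  | cons h p => exact Or.inr (adj_penultimate not_nil_cons).symm

theorem IsAcyclic.penultimate_eq_or_penultimate_eq (hG : G.IsAcyclic) {r v w : V}
    {P : G.Walk r v} {Q : G.Walk r w} (hP : P.IsPath) (hQ : Q.IsPath) (hadj : G.Adj v w) :
    P.penultimate = w ∨ Q.penultimate = v := by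
  by_cases hw : w ∈ P.support
  · exact Or.inl (hG.eq_penultimate_of_adj_end hP hadj hw).symm
  · exact Or.inr (hG.eq_penultimate_of_adj_end hQ hadj.symm
      (hG.mem_support_of_ne_mem_support_of_adj_of_isPath hQ hP hadj.symm hw)).symm

theorem IsAcyclic.exists_isParentMap (hG : G.IsAcyclic) : ∃ p, G.IsParentMap p := by
  let root : V → V := fun v => (G.connectedComponentMk v).out
  have hroot : ∀ v, G.Reachable (root v) v := fun v => ConnectedComponent.exact (Quot.out_eq _)
  choose P hP using fun v => (hroot v).exists_isPath
  refine ⟨fun v => (P v).penultimate, fun v => (P v).penultimate_eq_or_adj, fun v w hadj => ?_⟩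
  obtain ⟨Q, hQ, hQP⟩ :
      ∃ Q : G.Walk (root v) w, Q.IsPath ∧ Q.penultimate = (P w).penultimate := by
    rw [show root v = root w from congrArg Quot.out (ConnectedComponent.sound hadj.reachable)]
    exact ⟨P w, hP w, rfl⟩
  simpa only [hQP] using hG.penultimate_eq_or_penultimate_eq (hP v) hQ hadj

end SimpleGraph

section ParentSelection

variable {V : Type*}

def Selected (p : V → V) (y : V → Bool) (v : V) : Prop :=
  y v = true ∧ (p v = v ∨ y (p v) = false)

instance [DecidableEq V] (p : V → V) (y : V → Bool) : DecidablePred (Selected p y) :=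
  fun _ => inferInstanceAs (Decidable (_ ∧ _))

theorem dependsOn_not_selected {κ : Type*} (p : κ → V → V) (j : κ) (v : V) :
    DependsOn (fun x : κ × V → Bool => ¬Selected (p j) (curry x j) v)
      {(j, v), (j, p j v)} := by
  intro x y h
  simp only [Selected, curry, h (j, v) (by simp), h (j, p j v) (by simp)]

theorem SimpleGraph.IsParentMap.indepIn_setOf_selected {G : SimpleGraph V} {p : V → V}
    (hp : G.IsParentMap p) (y : V → Bool) : IndepIn G {v | Selected p y v} := by
  have key : ∀ ⦃u v⦄, G.Adj u v → p u = v → Selected p y u → ¬Selected p y v := by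
    rintro u v hadj rfl ⟨-, hroot | hpar⟩ ⟨hv, -⟩
    · exact hadj.ne hroot.symm
    · exact Bool.false_ne_true (hpar.symm.trans hv)
  intro u hu v hv hadj
  rcases hp.eq_or_eq_of_adj hadj with h | h
  exacts [key hadj h hu hv, key hadj.symm h hv hu]

theorem SimpleGraph.IsParentMap.card_filter_eq_le [Fintype V] [DecidableEq V]
    {G : SimpleGraph V} {p : V → V} (hp : G.IsParentMap p) (w : V) :
    #{u | p u = w} ≤ maxDeg G + 1 := by
  classical
  have hsub : ({u | p u = w} : Finset V) ⊆ insert w (G.neighborSet w).toFinset := by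
    intro u hu
    rw [mem_filter] at hu
    rcases hp.eq_or_adj u with h | h
    · exact mem_insert.mpr (Or.inl (h ▸ hu.2))
    · exact mem_insert_of_mem (by simpa [← hu.2] using h.symm)
  have hdeg : (G.neighborSet w).ncard ≤ maxDeg G :=
    le_sup (f := fun v => (G.neighborSet v).ncard) (mem_univ w)
  rw [Set.ncard_eq_toFinset_card'] at hdeg
  exact (card_le_card hsub).trans ((card_insert_le _ _).trans (by omega))

theorem card_le_four_mul_card_selected {κ : Type*} [Fintype κ] [DecidableEq κ] [Fintype V]
    [DecidableEq V] (p : V → V) (j : κ) (v : V) :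
    Fintype.card (κ × V → Bool) ≤ 4 * #{x : κ × V → Bool | Selected p (curry x j) v} := by
  set S : Finset (κ × V → Bool) := {x | Selected p (curry x j) v}
  set B : Finset (κ × V → Bool) := {x | x (j, v) = true}
  have hB : #B * 2 = Fintype.card (κ × V → Bool) := card_filter_apply_eq_mul (j, v) true
  by_cases hroot : p v = v
  · have : S = B := by ext x; simp [S, B, Selected, hroot, curry]
    rw [this]; omega
  set C : Finset (κ × V → Bool) := {x | x (j, p v) = false}
  have hC : #C * 2 = Fintype.card (κ × V → Bool) := card_filter_apply_eq_mul (j, p v) false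
  have hBC : #(B ∩ C) * Fintype.card (κ × V → Bool) = #B * #C := by
    refine card_inter_mul_card_fun (s := {(j, v)}) (t := {(j, p v)}) ?_
      (fun x y h => by simp [B, h (j, v) rfl]) (fun x y h => by simp [C, h (j, p v) rfl])
    simpa [Prod.ext_iff] using Ne.symm hroot
  have hsub : B ∩ C ⊆ S := by
    intro x hx
    simp only [B, C, mem_inter, mem_filter, mem_univ, true_and] at hx
    simp only [S, mem_filter, mem_univ, true_and]
    exact ⟨hx.1, Or.inr hx.2⟩
  have := card_le_card hsub
  have hpos : 0 < Fintype.card (κ × V → Bool) := Fintype.card_pos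
  nlinarith

variable {κ : Type*} (p : κ → V → V)

def bitSupport (v : V) : Set (κ × V) := {i | i.2 = v ∨ i.2 = p i.1 v}

variable [Fintype V] [DecidableEq V] [Fintype κ]

def relatives (v : V) : Finset V :=
  {u | u ≠ v ∧ ∃ j, u = p j v ∨ p j u = v ∨ p j u = p j v}

variable {p}

theorem mem_relatives_of_not_disjoint {u v : V} (huv : u ≠ v)
    (h : ¬Disjoint (bitSupport p u) (bitSupport p v)) : u ∈ relatives p v := by
  obtain ⟨⟨j, w⟩, hu, hv⟩ := Set.not_disjoint_iff.mp h
  simp only [bitSupport, Set.mem_ofPred_eq] at hu hv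
  simp only [relatives, mem_filter, mem_univ, true_and]
  refine ⟨huv, j, ?_⟩
  rcases hu with hu | hu <;> rcases hv with hv | hv
  exacts [absurd (hu.symm.trans hv) huv, Or.inl (hu.symm.trans hv),
    Or.inr (Or.inl (hu.symm.trans hv)), Or.inr (Or.inr (hu.symm.trans hv))]

theorem card_relatives_le {G : κ → SimpleGraph V} (hp : ∀ j, (G j).IsParentMap (p j)) {d : ℕ}
    (hdeg : ∀ j, maxDeg (G j) ≤ d) (v : V) :
    #(relatives p v) ≤ Fintype.card κ * (2 * d + 3) := by
  let near : κ → Finset V := fun j =>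
    insert (p j v) (univ.filter (p j · = v) ∪ univ.filter (p j · = p j v))
  have hsub : relatives p v ⊆ univ.biUnion near := by
    intro u hu
    simp only [relatives, mem_filter, mem_univ, true_and] at hu
    obtain ⟨-, j, hj⟩ := hu
    simp only [near, mem_biUnion, mem_univ, true_and, mem_insert, mem_union, mem_filter]
    exact ⟨j, hj⟩
  have hnear : ∀ j, #(near j) ≤ 2 * d + 3 := by
    intro j
    dsimp only [near]
    have := (hp j).card_filter_eq_le v
    have := (hp j).card_filter_eq_le (p j v)
    have := card_union_le (univ.filter (p j · = v)) (univ.filter (p j · = p j v))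
    have := card_insert_le (p j v) (univ.filter (p j · = v) ∪ univ.filter (p j · = p j v))
    have := hdeg j
    omega
  calc #(relatives p v) ≤ ∑ j, #(near j) := (card_le_card hsub).trans card_biUnion_le
    _ ≤ ∑ _j : κ, (2 * d + 3) := sum_le_sum fun j _ => hnear j
    _ = Fintype.card κ * (2 * d + 3) := by simp

variable [DecidableEq κ] (p)

def uncovered (v : V) : Finset (κ × V → Bool) := {x | ∀ j, ¬Selected (p j) (curry x j) v}

variable {p}

theorem dependsOn_mem_uncovered (v : V) : DependsOn (· ∈ uncovered p v) (bitSupport p v) := by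
  have h := dependsOn_forall_mem Set.univ fun j _ => dependsOn_not_selected p j v
  have hsub : ⋃ j ∈ Set.univ, ({(j, v), (j, p j v)} : Set (κ × V)) ⊆ bitSupport p v := by
    simp only [Set.subset_def, Set.mem_iUnion, Set.mem_univ, exists_true_left,
      Set.mem_insert_iff, Set.mem_singleton_iff]
    rintro _ ⟨j, rfl | rfl⟩ <;> simp [bitSupport]
  intro x y hxy
  simpa [uncovered] using h.mono hsub hxy

theorem card_uncovered_le (v : V) :
    #(uncovered p v) ≤ (3 / 4 : ℝ) ^ Fintype.card κ * Fintype.card (κ × V → Bool) := by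
  have hq : ∀ j, (#{x : κ × V → Bool | ¬Selected (p j) (curry x j) v} : ℝ)
      ≤ 3 / 4 * Fintype.card (κ × V → Bool) := by
    intro j
    have h4 : (Fintype.card (κ × V → Bool) : ℝ)
        ≤ 4 * #{x : κ × V → Bool | Selected (p j) (curry x j) v} := by
      exact_mod_cast card_le_four_mul_card_selected (p j) j v
    have hsplit := card_filter_add_card_filter_not (s := (univ : Finset (κ × V → Bool)))
      fun x => Selected (p j) (curry x j) v
    rw [card_univ] at hsplit
    have : ((#{x : κ × V → Bool | Selected (p j) (curry x j) v} : ℕ) : ℝ)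
        + #{x : κ × V → Bool | ¬Selected (p j) (curry x j) v}
        = Fintype.card (κ × V → Bool) := by
      exact_mod_cast hsplit
    linarith
  have hs : Pairwise (Disjoint on fun j : κ => ({(j, v), (j, p j v)} : Set (κ × V))) := by
    intro j j' hjj'
    simp [onFun, Set.disjoint_left, hjj']
  simpa [uncovered] using card_filter_forall_mem_le_pow_mul univ
    (fun j => by simpa using dependsOn_not_selected p j v) hs hq

end ParentSelection

theorem hasCoopColoring_of_isParentMap {V : Type*} [Fintype V] [DecidableEq V] {m d : ℕ}
    {G : Fin m → SimpleGraph V} {p : Fin m → V → V} (hp : ∀ j, (G j).IsParentMap (p j))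
    (hdeg : ∀ j, maxDeg (G j) ≤ d) (hm : 3 * (m * (2 * d + 3) + 2) ≤ (4 / 3 : ℝ) ^ m) :
    HasCoopColoring G := by
  have hprob : ∀ v, 3 * (m * (2 * d + 3) + 2) * #(uncovered p v)
      ≤ Fintype.card (Fin m × V → Bool) := by
    intro v
    have h := card_uncovered_le (p := p) v
    rw [Fintype.card_fin] at h
    have h34 : (3 / 4 : ℝ) ^ m * (4 / 3) ^ m = 1 := by rw [← mul_pow]; norm_num
    have : (3 * (m * (2 * d + 3) + 2) * #(uncovered p v) : ℝ)
        ≤ Fintype.card (Fin m × V → Bool) := by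
      calc (3 * (m * (2 * d + 3) + 2) * #(uncovered p v) : ℝ)
          ≤ (4 / 3) ^ m * ((3 / 4) ^ m * Fintype.card (Fin m × V → Bool)) := by gcongr
        _ = Fintype.card (Fin m × V → Bool) := by
          rw [← mul_assoc, mul_comm _ ((3 / 4 : ℝ) ^ m), h34, one_mul]
    exact_mod_cast this
  obtain ⟨x, hx⟩ := exists_forall_notMem_of_dependsOn (uncovered p) (bitSupport p) (relatives p)
    _ dependsOn_mem_uncovered (fun u v huv h => mem_relatives_of_not_disjoint huv h)
    (fun v => by simpa using card_relatives_le hp hdeg v) hprob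
  refine ⟨fun j => {v | Selected (p j) (curry x j) v},
    fun j => (hp j).indepIn_setOf_selected _, Set.eq_univ_of_forall fun v => ?_⟩
  simpa [uncovered] using hx v

theorem treesColorable_of_le_pow {d m : ℕ}
    (hm : 3 * (m * (2 * d + 3) + 2) ≤ (4 / 3 : ℝ) ^ m) :
    TreesColorable d m := by
  intro V _ T hT hdeg
  classical
  choose p hp using fun j => (hT j).isAcyclic.exists_isParentMap
  exact hasCoopColoring_of_isParentMap hp hdeg hm

open Filter Topology

theorem Filter.exists_tendsto_zero_le_one_add_mul {α : Type*} {l : Filter α} {g L : α → ℝ}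
    (hL : ∀ᶠ a in l, 0 < L a) (h : ∀ ε > 0, ∀ᶠ a in l, g a ≤ (1 + ε) * L a) :
    ∃ f : α → ℝ, Tendsto f l (𝓝 0) ∧ ∀ᶠ a in l, g a ≤ (1 + f a) * L a := by
  refine ⟨fun a => max 0 (g a / L a - 1),
    tendsto_order.2 ⟨fun b hb => ?_, fun b hb => ?_⟩, ?_⟩
  · exact Eventually.of_forall fun a => hb.trans_le (le_max_left _ _)
  · filter_upwards [h (b / 2) (half_pos hb), hL] with a hg hLa
    refine max_lt hb ?_
    rw [sub_lt_iff_lt_add', div_lt_iff₀ hLa]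
    nlinarith
  · filter_upwards [hL] with a hLa
    rw [← div_le_iff₀ hLa]
    linarith [le_max_right 0 (g a / L a - 1)]

theorem tendsto_logb_natCast_atTop {b : ℝ} (hb : 1 < b) :
    Tendsto (fun n : ℕ => Real.logb b n) atTop atTop :=
  (Real.tendsto_logb_atTop hb).comp tendsto_natCast_atTop_atTop

theorem eventually_le_four_thirds_pow {ε : ℝ} (hε : 0 < ε) :
    ∀ᶠ d : ℕ in atTop, ∀ m : ℕ, (1 + ε) * Real.logb (4 / 3) d ≤ m →
      3 * (m * (2 * d + 3) + 2) ≤ (4 / 3 : ℝ) ^ m := by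
  set r : ℝ := 4 / 3
  have hr : 1 < r := by norm_num
  set q : ℝ := r ^ (ε / (1 + ε))
  have hq : 1 < q := Real.one_lt_rpow hr (by positivity)
  obtain ⟨N, hN⟩ := eventually_atTop.mp <|
    (tendsto_pow_const_div_const_pow_of_one_lt 1 hq).eventually
      (gt_mem_nhds (by norm_num : (0 : ℝ) < 1 / 21))
  filter_upwards [(tendsto_logb_natCast_atTop hr).eventually_ge_atTop (max N 1),
    eventually_ge_atTop 1] with d hd hd1 m hm
  have hlog0 : 0 ≤ Real.logb r d := le_trans (by positivity) hd
  have hmN : (max N 1 : ℝ) ≤ m := by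
    refine hd.trans (le_trans ?_ hm); nlinarith
  have hm1 : (1 : ℝ) ≤ m := le_trans (by exact_mod_cast le_max_right N 1) hmN
  have hd1' : (1 : ℝ) ≤ d := by exact_mod_cast hd1
  have h21 : 21 * (m : ℝ) ≤ q ^ m := by
    have := hN m (by exact_mod_cast (le_max_left (N : ℝ) 1).trans hmN)
    rw [pow_one, div_lt_iff₀ (by positivity)] at this
    linarith
  have hdr : (d : ℝ) ≤ r ^ ((m : ℝ) / (1 + ε)) := by
    calc (d : ℝ) = r ^ Real.logb r d := (Real.rpow_logb (by norm_num) hr.ne' (by positivity)).symm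
      _ ≤ r ^ ((m : ℝ) / (1 + ε)) := Real.rpow_le_rpow_of_exponent_le hr.le
          ((le_div_iff₀ (by positivity)).mpr (by linarith))
  have hsplit : r ^ m = q ^ m * r ^ ((m : ℝ) / (1 + ε)) := by
    rw [← Real.rpow_natCast, ← Real.rpow_natCast q, ← Real.rpow_mul (by positivity),
      ← Real.rpow_add (by positivity)]
    congr 1
    field_simp
    ring
  calc (3 * (m * (2 * d + 3) + 2) : ℝ) ≤ 21 * m * d := by nlinarith
    _ ≤ q ^ m * r ^ ((m : ℝ) / (1 + ε)) := by gcongr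
    _ = r ^ m := hsplit.symm

theorem mT_le_eventually {ε : ℝ} (hε : 0 < ε) :
    ∀ᶠ d : ℕ in atTop, (mT d : ℝ) ≤ (1 + ε) * Real.logb (4 / 3) d := by
  filter_upwards [eventually_le_four_thirds_pow (half_pos hε),
    (tendsto_logb_natCast_atTop (b := 4 / 3) (by norm_num)).eventually_ge_atTop (2 / ε)]
    with d hd hL
  set L := Real.logb (4 / 3) d
  have hL0 : 0 ≤ (1 + ε / 2) * L :=
    mul_nonneg (by positivity) ((by positivity : 0 ≤ 2 / ε).trans hL)
  have hmT : mT d ≤ ⌈(1 + ε / 2) * L⌉₊ :=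
    Nat.sInf_le (treesColorable_of_le_pow (hd _ (Nat.le_ceil _)))
  have hεL : 1 ≤ ε / 2 * L := by
    rw [div_le_iff₀ hε] at hL; nlinarith
  calc (mT d : ℝ) ≤ ⌈(1 + ε / 2) * L⌉₊ := by exact_mod_cast hmT
    _ ≤ (1 + ε / 2) * L + 1 := (Nat.ceil_lt_add_one hL0).le
    _ ≤ (1 + ε) * L := by linarith

open Filter in
/-- For every `ε > 0`, if `d` is sufficiently large then every `m ≥
(1 + ε) log_{4/3} d` trees of maximum degree at most `d` have a cooperative
coloring; in particular `m_T(d) ≤ (1 + o(1)) log_{4/3} d`. -/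
theorem trees_upper_bound :
    (∀ ε : ℝ, 0 < ε → ∃ d₀ : ℕ, ∀ d : ℕ, d₀ ≤ d → ∀ m : ℕ,
      (1 + ε) * Real.logb (4 / 3) d ≤ m → TreesColorable d m) ∧
    ∃ f : ℕ → ℝ, Tendsto f atTop (nhds 0) ∧
      ∀ᶠ d : ℕ in atTop, (mT d : ℝ) ≤ (1 + f d) * Real.logb (4 / 3) d := by
  refine ⟨fun ε hε => ?_, ?_⟩
  · obtain ⟨d₀, h⟩ := eventually_atTop.mp (eventually_le_four_thirds_pow hε)
    exact ⟨d₀, fun d hd m hm => treesColorable_of_le_pow (h d hd m hm)⟩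
  · exact exists_tendsto_zero_le_one_add_mul
      ((tendsto_logb_natCast_atTop (b := 4 / 3) (by norm_num)).eventually_gt_atTop 0)
      fun ε hε => mT_le_eventually hε
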